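/- There exists a (central, non-ticketed) learning–unlearning scheme for the class H_pt of point functions with space complexity C = O(log|X|), valid for all H_pt-realizable datasets without repeated examples: Learn(S) returns h ∈ ERM_{H_pt}(S) and auxiliary information of O(log|X|) bits, and for every I ⊆ [n], Unlearn(S_I, aux) returns the same hypothesis that Learn returns on S ∖ S_I. -/

import Mathlib

/-- Empirical loss of hypothesis `h` on dataset `S` (sum of 0-1 losses). -/
def empLoss {X : Type} (h : X → Bool) (S : List (X × Bool)) : ℕ :=
  (S.map fun z => if h z.1 = z.2 then 0 else 1).sum

/-- A dataset is `H`-realizable if some hypothesis in `H` has zero empirical loss on it. -/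
def IsRealizable {X : Type} (H : Set (X → Bool)) (S : List (X × Bool)) : Prop :=
  ∃ h ∈ H, empLoss h S = 0

/-- The set of empirical risk minimizers in `H` on the dataset `S`. -/
def ERM {X : Type} (H : Set (X → Bool)) (S : List (X × Bool)) : Set (X → Bool) :=
  {h | h ∈ H ∧ ∀ g ∈ H, empLoss h S ≤ empLoss g S}

/-- The surviving dataset `S ∖ S_I`: the examples of `S` at indices outside `I`,
kept in their original order. -/
def surviving {Z : Type} (S : List Z) (I : Finset (Fin S.length)) : List Z :=
  ((List.finRange S.length).filter fun i => decide (i ∉ I)).map S.get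

/-- The unlearning request `S_I`: the examples of `S` at indices in `I`,
in their original order. -/
def removedList {Z : Type} (S : List Z) (I : Finset (Fin S.length)) : List Z :=
  ((List.finRange S.length).filter fun i => decide (i ∈ I)).map S.get

/-- The point function `h_a(x) = 1{x = a}` on the domain `Fin N` (representing `{1, …, N}`). -/
def pointFn {N : ℕ} (a : Fin N) : Fin N → Bool := fun x => decide (x = a)

/-- The class of point functions over `Fin N`. -/
def Hpt (N : ℕ) : Set (Fin N → Bool) := Set.range pointFn

/-!
Learn returns `h_a` if `S` has a positive example `(a, 1)`, and otherwise `h_m` for the least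
point `m` that carries no negative label in `S`; the auxiliary information is the pair
`(a or none, m or ⊤)`, i.e. two elements of `Option X`, which fit into `2⌈log₂|X|⌉ + 2` bits.
Since `S` has no repetitions, `S ∖ S_I` consists exactly of the examples of `S` that are not
in `S_I`. So the positive point survives iff `(a, 1) ∉ S_I`, and the points without a negative
label in `S ∖ S_I` are those of `S` together with the negatives of `S_I`, whose least element
is `min m (least negative point of S_I)`.
-/

section Dataset

variable {X : Type}

theorem empLoss_eq_zero_iff {h : X → Bool} {S : List (X × Bool)} :
    empLoss h S = 0 ↔ ∀ z ∈ S, h z.1 = z.2 := by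
  simp only [empLoss, List.sum_eq_zero_iff, List.mem_map]
  constructor
  · intro H z hz
    by_contra hne
    simpa [hne] using H _ ⟨z, hz, rfl⟩
  · rintro H _ ⟨z, hz, rfl⟩
    simp [H z hz]

theorem mem_ERM_of_empLoss_eq_zero {H : Set (X → Bool)} {S : List (X × Bool)} {h : X → Bool}
    (hH : h ∈ H) (hS : empLoss h S = 0) : h ∈ ERM H S :=
  ⟨hH, fun _ _ => hS ▸ Nat.zero_le _⟩

theorem IsRealizable.mono {H : Set (X → Bool)} {S T : List (X × Bool)}
    (hS : IsRealizable H S) (hTS : ∀ z ∈ T, z ∈ S) : IsRealizable H T := by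
  obtain ⟨h, hH, hloss⟩ := hS
  exact ⟨h, hH, empLoss_eq_zero_iff.mpr fun z hz => empLoss_eq_zero_iff.mp hloss z (hTS z hz)⟩

end Dataset

section Unlearning

variable {Z : Type} {S : List Z} {I : Finset (Fin S.length)} {z : Z}

theorem mem_removedList : z ∈ removedList S I ↔ ∃ i ∈ I, S.get i = z := by
  simp [removedList, List.mem_filter]

theorem mem_surviving : z ∈ surviving S I ↔ ∃ i ∉ I, S.get i = z := by
  simp [surviving, List.mem_filter]

theorem mem_of_mem_surviving (hz : z ∈ surviving S I) : z ∈ S := by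
  obtain ⟨i, -, rfl⟩ := mem_surviving.mp hz
  exact S.get_mem i

theorem mem_surviving_iff (hS : S.Nodup) :
    z ∈ surviving S I ↔ z ∈ S ∧ z ∉ removedList S I := by
  have hinj : Function.Injective S.get := List.nodup_iff_injective_get.mp hS
  rw [mem_surviving, mem_removedList, List.mem_iff_get]
  constructor
  · rintro ⟨i, hiI, rfl⟩
    exact ⟨⟨i, rfl⟩, fun ⟨j, hjI, hji⟩ => hiI (hinj hji ▸ hjI)⟩
  · rintro ⟨⟨i, rfl⟩, hnot⟩
    exact ⟨i, fun hiI => hnot ⟨i, hiI, rfl⟩, rfl⟩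

end Unlearning

namespace PointFunctionLU

variable {N : ℕ}

theorem empLoss_pointFn_eq_zero_iff {a : Fin N} {S : List (Fin N × Bool)} :
    empLoss (pointFn a) S = 0 ↔ (∀ x, (x, true) ∈ S → x = a) ∧ (a, false) ∉ S := by
  rw [empLoss_eq_zero_iff]
  constructor
  · intro H
    refine ⟨fun x hx => by simpa [pointFn] using H _ hx, fun ha => ?_⟩
    simpa [pointFn] using H _ ha
  · rintro ⟨hpos, hneg⟩ ⟨x, b⟩ hxb
    cases b
    · simpa [pointFn] using fun hxa : x = a => hneg (hxa ▸ hxb)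
    · simpa [pointFn] using hpos x hxb

theorem isRealizable_Hpt_iff {S : List (Fin N × Bool)} :
    IsRealizable (Hpt N) S ↔ ∃ a, (∀ x, (x, true) ∈ S → x = a) ∧ (a, false) ∉ S := by
  simp only [IsRealizable, Hpt, Set.exists_range_iff, empLoss_pointFn_eq_zero_iff]

/-- The value at `⊤` is irrelevant: on realizable data `learnedPt` is finite
(`exists_learnedPt_eq`). -/
def pointFnTop : WithTop (Fin N) → Fin N → Bool :=
  WithTop.recTopCoe (fun _ => false) pointFn

def posPt (S : List (Fin N × Bool)) : Option (Fin N) :=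
  (S.find? fun z => z.2).map Prod.fst

def negPts (S : List (Fin N × Bool)) : Finset (Fin N) :=
  {x | (x, false) ∈ S}

def minNonNeg (S : List (Fin N × Bool)) : WithTop (Fin N) :=
  (negPts S)ᶜ.min

def learnedPt (S : List (Fin N × Bool)) : WithTop (Fin N) :=
  (posPt S).elim (minNonNeg S) (↑)

def unlearnedPt (R : List (Fin N × Bool)) (aux : Option (Fin N) × WithTop (Fin N)) :
    WithTop (Fin N) :=
  (aux.1.filter fun a => decide ((a, true) ∉ R)).elim (aux.2 ⊓ (negPts R).min) (↑)

theorem mem_posPt {S : List (Fin N × Bool)} (hS : IsRealizable (Hpt N) S) {a : Fin N} :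
    a ∈ posPt S ↔ (a, true) ∈ S := by
  obtain ⟨a₀, hpos, -⟩ := isRealizable_Hpt_iff.mp hS
  have mem_of_find : ∀ {z}, (S.find? fun z => z.2) = some z → (z.1, true) ∈ S := fun hz =>
    List.find?_some hz ▸ List.mem_of_find?_eq_some hz
  simp only [posPt, Option.mem_def, Option.map_eq_some_iff]
  constructor
  · rintro ⟨z, hz, rfl⟩
    exact mem_of_find hz
  · intro ha
    obtain ⟨z, hz⟩ := Option.isSome_iff_exists.mp
      (List.find?_isSome.mpr ⟨(a, true), ha, rfl⟩ : (S.find? fun z => z.2).isSome)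
    exact ⟨z, hz, by rw [hpos _ (mem_of_find hz), hpos _ ha]⟩

theorem exists_learnedPt_eq {S : List (Fin N × Bool)} (hS : IsRealizable (Hpt N) S) :
    ∃ a : Fin N, learnedPt S = a ∧ empLoss (pointFn a) S = 0 := by
  obtain ⟨a₀, hpos, hneg⟩ := isRealizable_Hpt_iff.mp hS
  cases hp : posPt S with
  | some a =>
    have ha : a = a₀ := hpos a ((mem_posPt hS).mp hp)
    subst ha
    exact ⟨a, by simp [learnedPt, hp], empLoss_pointFn_eq_zero_iff.mpr ⟨hpos, hneg⟩⟩
  | none =>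
    have hnopos : ∀ x, (x, true) ∉ S := fun x hx => by
      simpa [hp] using (mem_posPt hS).mpr hx
    have ha₀ : a₀ ∈ (negPts S)ᶜ := by simpa [negPts] using hneg
    obtain ⟨m, hm⟩ := Finset.min_of_mem ha₀
    have hmneg : (m, false) ∉ S := by simpa [negPts] using Finset.mem_of_min hm
    exact ⟨m, by simp [learnedPt, hp, minNonNeg, hm],
      empLoss_pointFn_eq_zero_iff.mpr ⟨fun x hx => (hnopos x hx).elim, hmneg⟩⟩

theorem pointFnTop_learnedPt_mem_ERM {S : List (Fin N × Bool)} (hS : IsRealizable (Hpt N) S) :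
    pointFnTop (learnedPt S) ∈ ERM (Hpt N) S := by
  obtain ⟨a, ha, hloss⟩ := exists_learnedPt_eq hS
  rw [ha, pointFnTop, WithTop.recTopCoe_coe]
  exact mem_ERM_of_empLoss_eq_zero ⟨a, rfl⟩ hloss

section Surviving

variable {S : List (Fin N × Bool)} {I : Finset (Fin S.length)}

theorem posPt_surviving (hnd : S.Nodup) (hS : IsRealizable (Hpt N) S) :
    posPt (surviving S I) =
      (posPt S).filter fun a => decide ((a, true) ∉ removedList S I) := by
  ext a
  simp only [← Option.mem_def]
  rw [Option.mem_filter_iff, mem_posPt (hS.mono fun _ => mem_of_mem_surviving),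
    mem_surviving_iff hnd, mem_posPt hS, decide_eq_true_iff]

theorem minNonNeg_surviving (hnd : S.Nodup) :
    minNonNeg (surviving S I) = minNonNeg S ⊓ (negPts (removedList S I)).min := by
  have : (negPts (surviving S I))ᶜ = (negPts S)ᶜ ∪ negPts (removedList S I) := by
    ext x
    simp only [negPts, Finset.mem_compl, Finset.mem_union, Finset.mem_filter,
      Finset.mem_univ, true_and, mem_surviving_iff hnd]
    tauto
  rw [minNonNeg, this, Finset.min_union, minNonNeg]

theorem unlearnedPt_removedList (hnd : S.Nodup) (hS : IsRealizable (Hpt N) S) :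
    unlearnedPt (removedList S I) (posPt S, minNonNeg S) = learnedPt (surviving S I) := by
  rw [learnedPt, posPt_surviving hnd hS, minNonNeg_surviving hnd, unlearnedPt]

end Surviving

theorem card_option_prod_withTop_le :
    Fintype.card (Option (Fin N) × WithTop (Fin N)) ≤
      Fintype.card (Fin (2 * Nat.clog 2 N + 2) → Bool) := by
  have hN : N + 1 ≤ 2 ^ (Nat.clog 2 N + 1) := by
    rw [pow_succ]
    have := Nat.le_pow_clog one_lt_two N
    have := Nat.one_le_two_pow (n := Nat.clog 2 N)
    omega
  calc Fintype.card (Option (Fin N) × WithTop (Fin N)) = (N + 1) * (N + 1) := by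
        rw [Fintype.card_prod]
        change Fintype.card (Option (Fin N)) * Fintype.card (Option (Fin N)) = _
        rw [Fintype.card_option, Fintype.card_fin]
    _ ≤ 2 ^ (Nat.clog 2 N + 1) * 2 ^ (Nat.clog 2 N + 1) := Nat.mul_le_mul hN hN
    _ = Fintype.card (Fin (2 * Nat.clog 2 N + 2) → Bool) := by
        rw [← pow_add, Fintype.card_fun, Fintype.card_bool, Fintype.card_fin]; ring_nf

end PointFunctionLU

open PointFunctionLU

/-- **Theorem (central LU scheme for point functions, datasets without repetitions).**
There is a constant `c` such that for every domain size `N` there is a central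
(non-ticketed) learning–unlearning scheme for the class of point functions, valid for all
realizable datasets without repeated examples, whose auxiliary information has at most
`c · (log N + 1) = O(log|X|)` bits. -/
theorem point_functions_central_lu_no_repetitions :
    ∃ c : ℕ, 0 < c ∧
      ∀ N : ℕ, ∃ cs : ℕ,
        cs ≤ c * (Nat.clog 2 N + 1) ∧
        ∃ (Learn : List (Fin N × Bool) → (Fin N → Bool) × (Fin cs → Bool))
          (Unlearn : List (Fin N × Bool) → (Fin cs → Bool) → (Fin N → Bool)),
          ∀ S : List (Fin N × Bool), S.Nodup → IsRealizable (Hpt N) S →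
            (Learn S).1 ∈ ERM (Hpt N) S ∧
            ∀ I : Finset (Fin S.length),
              Unlearn (removedList S I) (Learn S).2 = (Learn (surviving S I)).1 := by
  refine ⟨2, two_pos, fun N => ⟨2 * Nat.clog 2 N + 2, by omega, ?_⟩⟩
  obtain ⟨encode⟩ :=
    Function.Embedding.nonempty_of_card_le (card_option_prod_withTop_le (N := N))
  refine ⟨fun S => (pointFnTop (learnedPt S), encode (posPt S, minNonNeg S)),
    fun R bits => pointFnTop (unlearnedPt R (Function.invFun encode bits)),
    fun S hnd hS => ⟨pointFnTop_learnedPt_mem_ERM hS, fun I => ?_⟩⟩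
  dsimp only
  rw [Function.leftInverse_invFun encode.injective, unlearnedPt_removedList hnd hS]
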